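/- arXiv:2310.02559 — 8 statements merged into one kernel-verified Lean document; each statement's English description precedes it below -/
import Mathlib

section
/- Let E be a real inner product space and F : E → ℝ be differentiable and L-smooth with L > 0. Then for any w ∈ E and any error vector e ∈ E, the one-step update w⁺ = w − (1/L)·(∇F(w) − e) satisfies F(w⁺) ≤ F(w) − (1/(2L))·‖∇F(w)‖² + (1/(2L))·‖e‖². -/
local notation "⟪" x ", " y "⟫" => @inner ℝ _ _ x y

/-- Lemma 1 core (descent step with gradient error): for an `L`-smooth `F` on a real
inner product space, the update `w⁺ = w − (1/L)·(∇F(w) − e)` satisfies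
`F(w⁺) ≤ F(w) − (1/(2L))‖∇F(w)‖² + (1/(2L))‖e‖²`. -/
theorem semifl_descent_step
    {E : Type*} [NormedAddCommGroup E] [InnerProductSpace ℝ E] [CompleteSpace E]
    (F : E → ℝ) (L : ℝ) (hL : 0 < L) (hdiff : Differentiable ℝ F)
    (hsmooth : ∀ w w' : E,
      F w ≤ F w' + ⟪w - w', gradient F w'⟫ + L / 2 * ‖w - w'‖ ^ 2)
    (w e : E) :
    F (w - (1 / L) • (gradient F w - e)) ≤
      F w - 1 / (2 * L) * ‖gradient F w‖ ^ 2 + 1 / (2 * L) * ‖e‖ ^ 2 := by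
  set g := gradient F w with hg
  have h := hsmooth (w - (1 / L) • (g - e)) w
  have h1 : w - (1 / L) • (g - e) - w = -((1 / L) • (g - e)) := by abel
  rw [h1] at h
  have h2 : ⟪-((1 / L) • (g - e)), g⟫ = -(1 / L) * ⟪g - e, g⟫ := by
    rw [inner_neg_left, real_inner_smul_left]; ring
  have h3 : ‖-((1 / L) • (g - e))‖ ^ 2 = (1 / L) ^ 2 * ‖g - e‖ ^ 2 := by
    rw [norm_neg, norm_smul]
    simp [abs_of_pos (by positivity : (0:ℝ) < 1 / L), mul_pow]
  have h4 : ‖g - e‖ ^ 2 = ‖g‖ ^ 2 - 2 * ⟪g, e⟫ + ‖e‖ ^ 2 := norm_sub_sq_real g e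
  have h5 : ⟪g - e, g⟫ = ‖g‖ ^ 2 - ⟪g, e⟫ := by
    rw [inner_sub_left, real_inner_self_eq_norm_sq, real_inner_comm e g]
  rw [h2, h3, h4, h5] at h
  have hL' : L ≠ 0 := ne_of_gt hL
  calc F (w - (1 / L) • (g - e)) ≤
      F w + -(1 / L) * (‖g‖ ^ 2 - ⟪g, e⟫) +
        L / 2 * ((1 / L) ^ 2 * (‖g‖ ^ 2 - 2 * ⟪g, e⟫ + ‖e‖ ^ 2)) := h
    _ = F w - 1 / (2 * L) * ‖g‖ ^ 2 + 1 / (2 * L) * ‖e‖ ^ 2 := by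
        field_simp
        ring
end

section
/- Let E be a real inner product space and F : E → ℝ be differentiable and L-smooth with L > 0. Let a1, a2 ∈ ℝ and e1, e2, e3 ∈ E, and suppose the update is w⁺ = w − (1/L)·ĝ where ∇F(w) − ĝ = a1·e1 + a2·e2 + a1·e3. Then F(w⁺) ≤ F(w) − (1/(2L))·‖∇F(w)‖² + (2a1²/L)·‖e1‖² + (2a2²/L)·‖e2‖² + (a1²/L)·‖e3‖². -/
local notation "⟪" x ", " y "⟫" => @inner ℝ _ _ x y

lemma sq_norm_add_le {E : Type*} [NormedAddCommGroup E] [InnerProductSpace ℝ E]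
    (x y : E) : ‖x + y‖ ^ 2 ≤ 2 * ‖x‖ ^ 2 + 2 * ‖y‖ ^ 2 := by
  have h1 := norm_add_sq_real x y
  have h2 := real_inner_le_norm x y
  nlinarith [sq_nonneg (‖x‖ - ‖y‖), norm_nonneg x, norm_nonneg y]

/-- Lemma 1 of the paper: one-round descent of the `L`-smooth loss `F` under the
update `w⁺ = w − (1/L)·ĝ`, where the global gradient error decomposes as
`∇F(w) − ĝ = a1·e1 + a2·e2 + a1·e3`. -/
theorem semifl_lemma1
    {E : Type*} [NormedAddCommGroup E] [InnerProductSpace ℝ E] [CompleteSpace E]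
    (F : E → ℝ) (L : ℝ) (hL : 0 < L) (hdiff : Differentiable ℝ F)
    (hsmooth : ∀ w w' : E,
      F w ≤ F w' + ⟪w - w', gradient F w'⟫ + L / 2 * ‖w - w'‖ ^ 2)
    (a1 a2 : ℝ) (e1 e2 e3 : E) (w ghat : E)
    (hdecomp : gradient F w - ghat = a1 • e1 + a2 • e2 + a1 • e3) :
    F (w - (1 / L) • ghat) ≤
      F w - 1 / (2 * L) * ‖gradient F w‖ ^ 2
        + 2 * a1 ^ 2 / L * ‖e1‖ ^ 2 + 2 * a2 ^ 2 / L * ‖e2‖ ^ 2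
        + a1 ^ 2 / L * ‖e3‖ ^ 2 := by
  set g := gradient F w with hg
  set d : E := a1 • e1 + a2 • e2 + a1 • e3 with hd
  have hghat : ghat = g - d := by
    rw [← hdecomp]; abel
  have h1 := hsmooth (w - (1 / L) • ghat) w
  have hsub : w - (1 / L) • ghat - w = -((1 / L) • ghat) := by abel
  rw [hsub] at h1
  have hinner : ⟪-((1 / L) • ghat), g⟫ = -(1 / L) * ⟪ghat, g⟫ := by
    rw [inner_neg_left, real_inner_smul_left]; ring
  have hnorm : ‖-((1 / L) • ghat)‖ ^ 2 = (1 / L) ^ 2 * ‖ghat‖ ^ 2 := by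
    rw [norm_neg, norm_smul]
    simp [mul_pow, abs_of_pos (by positivity : (0:ℝ) < 1 / L)]
  rw [hinner, hnorm] at h1
  -- expand ghat = g - d
  have hi2 : ⟪ghat, g⟫ = ‖g‖ ^ 2 - ⟪d, g⟫ := by
    rw [hghat, inner_sub_left, real_inner_self_eq_norm_sq]
  have hn2 : ‖ghat‖ ^ 2 = ‖g‖ ^ 2 - 2 * ⟪g, d⟫ + ‖d‖ ^ 2 := by
    rw [hghat]; exact norm_sub_sq_real g d
  have hsymm : ⟪d, g⟫ = ⟪g, d⟫ := real_inner_comm g d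
  -- first bound: F(w+) ≤ F w - ‖g‖²/(2L) + ‖d‖²/(2L)
  have key : F (w - (1 / L) • ghat) ≤ F w - 1 / (2 * L) * ‖g‖ ^ 2 + 1 / (2 * L) * ‖d‖ ^ 2 := by
    rw [hi2, hn2, hsymm] at h1
    have hL' : L ≠ 0 := ne_of_gt hL
    calc F (w - (1 / L) • ghat) ≤ _ := h1
      _ = F w - 1 / (2 * L) * ‖g‖ ^ 2 + 1 / (2 * L) * ‖d‖ ^ 2 := by
        field_simp
        ring
  -- bound ‖d‖²
  have hdb : ‖d‖ ^ 2 ≤ 4 * a1 ^ 2 * ‖e1‖ ^ 2 + 4 * a2 ^ 2 * ‖e2‖ ^ 2 + 2 * a1 ^ 2 * ‖e3‖ ^ 2 := by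
    have h3 := sq_norm_add_le (a1 • e1 + a2 • e2) (a1 • e3)
    have h4 := sq_norm_add_le (a1 • e1) (a2 • e2)
    have n1 : ‖a1 • e1‖ ^ 2 = a1 ^ 2 * ‖e1‖ ^ 2 := by
      rw [norm_smul]; simp [mul_pow, sq_abs]
    have n2 : ‖a2 • e2‖ ^ 2 = a2 ^ 2 * ‖e2‖ ^ 2 := by
      rw [norm_smul]; simp [mul_pow, sq_abs]
    have n3 : ‖a1 • e3‖ ^ 2 = a1 ^ 2 * ‖e3‖ ^ 2 := by
      rw [norm_smul]; simp [mul_pow, sq_abs]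
    rw [hd]
    nlinarith [h3, h4]
  have hLpos : (0:ℝ) < 1 / (2 * L) := by positivity
  have : 1 / (2 * L) * ‖d‖ ^ 2 ≤ 2 * a1 ^ 2 / L * ‖e1‖ ^ 2 + 2 * a2 ^ 2 / L * ‖e2‖ ^ 2
      + a1 ^ 2 / L * ‖e3‖ ^ 2 := by
    have := mul_le_mul_of_nonneg_left hdb (le_of_lt hLpos)
    calc 1 / (2 * L) * ‖d‖ ^ 2 ≤ _ := this
      _ = 2 * a1 ^ 2 / L * ‖e1‖ ^ 2 + 2 * a2 ^ 2 / L * ‖e2‖ ^ 2 + a1 ^ 2 / L * ‖e3‖ ^ 2 := by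
        field_simp; ring
  linarith [key]
end

section
/- Let E be a real inner product space, D a nonempty finite set with |D| = N, and (g_n)_{n∈D} a family of vectors in E such that ‖g_n‖² ≤ B for every n ∈ D, where B ≥ 0. Let S ⊆ D be nonempty with |S| = M. Then ‖(1/N)·∑_{n∈D} g_n − (1/M)·∑_{n∈S} g_n‖² ≤ ((N − M)/M)·B. -/
/-!
Split `D` into `S` and `D \ S`: the full average minus the subsample average is
`(1/N) ∑_{D \ S} g - (1/M - 1/N) ∑_S g`, and both terms have norm at most `(N - M)/N · √B`.
Squaring, `4 (N - M)² B / N² ≤ (N - M) B / M` is AM-GM in the form `4 M (N - M) ≤ N²`.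
-/

open Finset

theorem norm_sum_le_card_mul {ι E : Type*} [SeminormedAddCommGroup E] {s : Finset ι}
    {f : ι → E} {c : ℝ} (hf : ∀ i ∈ s, ‖f i‖ ≤ c) : ‖∑ i ∈ s, f i‖ ≤ #s * c := by
  simpa using norm_sum_le_of_le s hf

theorem norm_average_sub_subaverage_le {ι E : Type*} [SeminormedAddCommGroup E]
    [NormedSpace ℝ E] {D S : Finset ι} (hSD : S ⊆ D) (hS : S.Nonempty) {g : ι → E} {c : ℝ}
    (hg : ∀ n ∈ D, ‖g n‖ ≤ c) :
    ‖(1 / (#D : ℝ)) • ∑ n ∈ D, g n - (1 / (#S : ℝ)) • ∑ n ∈ S, g n‖ ≤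
      2 * (#D - #S) / #D * c := by
  classical
  have hM : (0 : ℝ) < #S := by exact_mod_cast hS.card_pos
  have hMN : (#S : ℝ) ≤ #D := by exact_mod_cast card_le_card hSD
  have hN : (0 : ℝ) < #D := hM.trans_le hMN
  have hcard : (#(D \ S) : ℝ) = #D - #S := by
    rw [card_sdiff_of_subset hSD, Nat.cast_sub (card_le_card hSD)]
  have hrest : ‖∑ n ∈ D \ S, g n‖ ≤ (#D - #S) * c :=
    hcard ▸ norm_sum_le_card_mul fun n hn => hg n (mem_sdiff.mp hn).1
  have hsub : ‖∑ n ∈ S, g n‖ ≤ #S * c := norm_sum_le_card_mul fun n hn => hg n (hSD hn)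
  have hcoeff : 0 ≤ 1 / (#S : ℝ) - 1 / #D := by
    rw [sub_nonneg]; exact one_div_le_one_div_of_le hM hMN
  calc ‖(1 / (#D : ℝ)) • ∑ n ∈ D, g n - (1 / (#S : ℝ)) • ∑ n ∈ S, g n‖
      = ‖(1 / (#D : ℝ)) • ∑ n ∈ D \ S, g n - (1 / (#S : ℝ) - 1 / #D) • ∑ n ∈ S, g n‖ := by
        rw [← sum_sdiff hSD]; congr 1; module
    _ ≤ ‖(1 / (#D : ℝ)) • ∑ n ∈ D \ S, g n‖ + ‖(1 / (#S : ℝ) - 1 / #D) • ∑ n ∈ S, g n‖ :=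
        norm_sub_le _ _
    _ ≤ 1 / #D * ((#D - #S) * c) + (1 / (#S : ℝ) - 1 / #D) * (#S * c) := by
        rw [norm_smul, norm_smul, Real.norm_of_nonneg (by positivity),
          Real.norm_of_nonneg hcoeff]
        gcongr
    _ = 2 * (#D - #S) / #D * c := by field_simp; ring

theorem sq_two_mul_sub_div_le_sub_div {N M : ℝ} (hM : 0 < M) (hMN : M ≤ N) :
    (2 * (N - M) / N) ^ 2 ≤ (N - M) / M := by
  have hN : 0 < N := hM.trans_le hMN
  rw [div_pow, div_le_div_iff₀ (by positivity) hM]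
  nlinarith [mul_nonneg (sub_nonneg.mpr hMN) (sq_nonneg (N - 2 * M))]

theorem semifl_subsample_bound_general
    {E : Type*} [NormedAddCommGroup E] [InnerProductSpace ℝ E]
    {ι : Type*} (D S : Finset ι) (hSD : S ⊆ D) (hS : S.Nonempty)
    (g : ι → E) (B : ℝ) (hB : 0 ≤ B) (hg : ∀ n ∈ D, ‖g n‖ ^ 2 ≤ B)
    (N M : ℕ) (hN : D.card = N) (hM : S.card = M) :
    ‖(1 / (N : ℝ)) • ∑ n ∈ D, g n - (1 / (M : ℝ)) • ∑ n ∈ S, g n‖ ^ 2 ≤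
      ((N : ℝ) - M) / M * B := by
  subst hN hM
  have hnorm := norm_average_sub_subaverage_le hSD hS fun n hn =>
    Real.le_sqrt_of_sq_le (hg n hn)
  have hscalar : (2 * (#D - #S) / #D : ℝ) ^ 2 ≤ (#D - #S) / #S :=
    sq_two_mul_sub_div_le_sub_div (by exact_mod_cast hS.card_pos)
      (by exact_mod_cast card_le_card hSD)
  calc _ ≤ (2 * (#D - #S) / #D * √B) ^ 2 := pow_le_pow_left₀ (norm_nonneg _) hnorm 2
    _ = (2 * (#D - #S) / #D) ^ 2 * B := by rw [mul_pow, Real.sq_sqrt hB]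
    _ ≤ (#D - #S) / #S * B := mul_le_mul_of_nonneg_right hscalar hB

/-- Lemma 2 core (subsampling error bound): if `‖g n‖² ≤ B` for all `n` in a finite
set `D` of cardinality `N`, and `S ⊆ D` is nonempty of cardinality `M`, then the
squared distance between the full average and the subsample average is at most
`((N − M)/M)·B`. -/
theorem semifl_subsample_bound
    {E : Type*} [NormedAddCommGroup E] [InnerProductSpace ℝ E]
    {ι : Type*} (D S : Finset ι) (hSD : S ⊆ D) (hD : D.Nonempty) (hS : S.Nonempty)
    (g : ι → E) (B : ℝ) (hB : 0 ≤ B) (hg : ∀ n ∈ D, ‖g n‖ ^ 2 ≤ B)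
    (N M : ℕ) (hN : D.card = N) (hM : S.card = M) :
    ‖(1 / (N : ℝ)) • ∑ n ∈ D, g n - (1 / (M : ℝ)) • ∑ n ∈ S, g n‖ ^ 2 ≤
      ((N : ℝ) - M) / M * B :=
  semifl_subsample_bound_general D S hSD hS g B hB hg N M hN hM
end

section
/- Let K ≥ 1 and Q ≥ 1 be integers, let g_1, …, g_K ∈ ℝ^Q satisfy ‖g_k‖² ≤ G² for all k (G ≥ 0), and let N_{f,1}, …, N_{f,K} be positive reals with N_f = ∑_{k=1}^K N_{f,k}. Let ḡ = (1/(K·Q))·∑_{k=1}^K ∑_{q=1}^Q g_{k,q} and let c_1, …, c_K ∈ ℂ. Define ĝ ∈ ℂ^Q componentwise by ĝ_q = ∑_{k=1}^K (N_{f,k}/N_f)·c_k·g_{k,q} + ∑_{k=1}^K (N_{f,k}/N_f)·(1 − c_k)·ḡ. Then ∑_{q=1}^Q |∑_{k=1}^K (N_{f,k}/N_f)·g_{k,q} − ĝ_q|² ≤ (4·K·G²/N_f²)·∑_{k=1}^K N_{f,k}²·|1 − c_k|². -/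
/-!
With `wₖ = N_{f,k}/N_f` the error is `∑ₖ wₖ (1 - cₖ) (gₖ - ḡ·𝟙)`, so summing the
Cauchy–Schwarz inequality over the coordinates bounds it by
`(∑ₖ wₖ² |1 - cₖ|²) · ∑ₖ ‖gₖ - ḡ·𝟙‖²`. Each deviation satisfies
`‖gₖ - ḡ·𝟙‖² ≤ 2‖gₖ‖² + 2Q ḡ² ≤ 4G²`, because `ḡ` is the mean of all `KQ` entries and hence
`Q ḡ² ≤ (1/K) ∑ₖ ‖gₖ‖² ≤ G²`.
-/

open Finset

lemma sub_add_sum_mul_one_sub_eq {ι R : Type*} [CommRing R] (s : Finset ι)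
    (w c x : ι → R) (m : R) :
    ∑ k ∈ s, w k * x k - (∑ k ∈ s, w k * c k * x k + ∑ k ∈ s, w k * (1 - c k) * m) =
      ∑ k ∈ s, w k * (1 - c k) * (x k - m) := by
  rw [← sum_add_distrib, ← sum_sub_distrib]
  exact sum_congr rfl fun k _ => by ring

lemma norm_sum_mul_sq_le {ι R : Type*} [SeminormedRing R] (s : Finset ι) (a x : ι → R) :
    ‖∑ k ∈ s, a k * x k‖ ^ 2 ≤ (∑ k ∈ s, ‖a k‖ ^ 2) * ∑ k ∈ s, ‖x k‖ ^ 2 :=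
  calc ‖∑ k ∈ s, a k * x k‖ ^ 2
      ≤ (∑ k ∈ s, ‖a k‖ * ‖x k‖) ^ 2 := by
        gcongr
        exact (norm_sum_le _ _).trans (sum_le_sum fun k _ => norm_mul_le _ _)
    _ ≤ (∑ k ∈ s, ‖a k‖ ^ 2) * ∑ k ∈ s, ‖x k‖ ^ 2 := sum_mul_sq_le_sq_mul_sq _ _ _

lemma sum_norm_sum_mul_sq_le {ι κ R : Type*} [SeminormedRing R] (s : Finset ι) (t : Finset κ)
    (a : ι → R) (x : ι → κ → R) :
    ∑ q ∈ t, ‖∑ k ∈ s, a k * x k q‖ ^ 2 ≤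
      (∑ k ∈ s, ‖a k‖ ^ 2) * ∑ k ∈ s, ∑ q ∈ t, ‖x k q‖ ^ 2 :=
  calc ∑ q ∈ t, ‖∑ k ∈ s, a k * x k q‖ ^ 2
      ≤ ∑ q ∈ t, (∑ k ∈ s, ‖a k‖ ^ 2) * ∑ k ∈ s, ‖x k q‖ ^ 2 :=
        sum_le_sum fun q _ => norm_sum_mul_sq_le s a (x · q)
    _ = (∑ k ∈ s, ‖a k‖ ^ 2) * ∑ k ∈ s, ∑ q ∈ t, ‖x k q‖ ^ 2 := by
        rw [← mul_sum, sum_comm]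

lemma sq_sum_sum_le_card_mul_sum_norm_sq {ι κ : Type*} [Fintype ι] [Fintype κ]
    (g : ι → EuclideanSpace ℝ κ) :
    (∑ i, ∑ j, g i j) ^ 2 ≤ (Fintype.card ι * Fintype.card κ : ℝ) * ∑ i, ‖g i‖ ^ 2 := by
  have h := sq_sum_le_card_mul_sum_sq (s := (univ : Finset (ι × κ))) (f := fun p => g p.1 p.2)
  simpa only [EuclideanSpace.norm_sq_eq, Real.norm_eq_abs, sq_abs, Fintype.sum_prod_type,
    card_univ, Fintype.card_prod, Nat.cast_mul] using h

lemma card_mul_sq_mean_le {ι κ : Type*} [Fintype ι] [Fintype κ]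
    (g : ι → EuclideanSpace ℝ κ) {G : ℝ} (hg : ∀ i, ‖g i‖ ^ 2 ≤ G ^ 2) :
    (Fintype.card κ : ℝ) *
        (1 / ((Fintype.card ι : ℝ) * Fintype.card κ) * ∑ i, ∑ j, g i j) ^ 2 ≤ G ^ 2 := by
  set n : ℝ := (Fintype.card ι : ℝ) * Fintype.card κ
  rcases (show (0 : ℝ) ≤ n by positivity).eq_or_lt with hn | hn
  · simp [← hn, sq_nonneg]
  have hsum : ∑ i, ‖g i‖ ^ 2 ≤ Fintype.card ι * G ^ 2 := by
    simpa using sum_le_sum fun i (_ : i ∈ univ) => hg i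
  calc (Fintype.card κ : ℝ) * (1 / n * ∑ i, ∑ j, g i j) ^ 2
      = Fintype.card κ * (∑ i, ∑ j, g i j) ^ 2 / n ^ 2 := by ring
    _ ≤ Fintype.card κ * (n * (Fintype.card ι * G ^ 2)) / n ^ 2 := by
        gcongr
        exact (sq_sum_sum_le_card_mul_sum_norm_sq g).trans (by gcongr)
    _ = G ^ 2 := by field_simp; ring

lemma sum_sub_sq_le {κ : Type*} [Fintype κ] (v : EuclideanSpace ℝ κ) (m : ℝ) :
    ∑ j, (v j - m) ^ 2 ≤ 2 * ‖v‖ ^ 2 + 2 * (Fintype.card κ * m ^ 2) := by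
  calc ∑ j, (v j - m) ^ 2 ≤ ∑ j, 2 * (v j ^ 2 + m ^ 2) :=
        sum_le_sum fun j _ => by simpa [sub_eq_add_neg] using add_sq_le (a := v j) (b := -m)
    _ = 2 * ‖v‖ ^ 2 + 2 * (Fintype.card κ * m ^ 2) := by
        simp [EuclideanSpace.norm_sq_eq, mul_sum, sum_add_distrib, mul_add, mul_left_comm]

theorem semifl_aggregation_error_bound_general
    (K Q : ℕ)
    (g : Fin K → EuclideanSpace ℝ (Fin Q)) (G : ℝ)
    (hg : ∀ k, ‖g k‖ ^ 2 ≤ G ^ 2)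
    (Nf : Fin K → ℝ)
    (NF : ℝ)
    (gbar : ℝ) (hgbar : gbar = (1 / ((K : ℝ) * Q)) * ∑ k, ∑ q, g k q)
    (c : Fin K → ℂ) (ghat : Fin Q → ℂ)
    (hghat : ∀ q, ghat q =
      ∑ k, ((Nf k / NF : ℝ) : ℂ) * c k * ((g k q : ℝ) : ℂ)
        + ∑ k, ((Nf k / NF : ℝ) : ℂ) * (1 - c k) * ((gbar : ℝ) : ℂ)) :
    ∑ q, ‖∑ k, ((Nf k / NF : ℝ) : ℂ) * ((g k q : ℝ) : ℂ) - ghat q‖ ^ 2 ≤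
      4 * K * G ^ 2 / NF ^ 2 * ∑ k, Nf k ^ 2 * ‖1 - c k‖ ^ 2 := by
  have hmean : (Q : ℝ) * gbar ^ 2 ≤ G ^ 2 := by
    simpa [hgbar] using card_mul_sq_mean_le g hg
  have hdev : ∀ k, ∑ q, ‖((g k q - gbar : ℝ) : ℂ)‖ ^ 2 ≤ 4 * G ^ 2 := fun k => by
    have h := sum_sub_sq_le (g k) gbar
    rw [Fintype.card_fin] at h
    simp only [Complex.norm_real, Real.norm_eq_abs, sq_abs]
    linarith [hg k]
  calc ∑ q, ‖∑ k, ((Nf k / NF : ℝ) : ℂ) * ((g k q : ℝ) : ℂ) - ghat q‖ ^ 2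
      = ∑ q, ‖∑ k, ((Nf k / NF : ℝ) : ℂ) * (1 - c k) * ((g k q - gbar : ℝ) : ℂ)‖ ^ 2 := by
        simp only [hghat, sub_add_sum_mul_one_sub_eq, Complex.ofReal_sub]
    _ ≤ (∑ k, ‖((Nf k / NF : ℝ) : ℂ) * (1 - c k)‖ ^ 2) *
          ∑ k, ∑ q, ‖((g k q - gbar : ℝ) : ℂ)‖ ^ 2 :=
        sum_norm_sum_mul_sq_le _ _ _ _
    _ ≤ (∑ k, ‖((Nf k / NF : ℝ) : ℂ) * (1 - c k)‖ ^ 2) * (K * (4 * G ^ 2)) := by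
        gcongr
        simpa using sum_le_sum fun k (_ : k ∈ univ) => hdev k
    _ = 4 * K * G ^ 2 / NF ^ 2 * ∑ k, Nf k ^ 2 * ‖1 - c k‖ ^ 2 := by
        simp only [norm_mul, Complex.norm_real, Real.norm_eq_abs, mul_pow, sq_abs, div_pow,
          mul_sum, sum_mul]
        exact sum_congr rfl fun k _ => by ring

/-- Noiseless over-the-air aggregation error bound (kernel of Lemma 2, error `e₃`):
with `c k` playing the role of `p_{f,k}·bᴴh_k`, the squared distance between the
desired aggregated gradient and the de-normalized received aggregate is at most
`(4KG²/N_f²)·∑_k N_{f,k}²·|1 − c_k|²`. -/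
theorem semifl_aggregation_error_bound
    (K Q : ℕ) (hK : 1 ≤ K) (hQ : 1 ≤ Q)
    (g : Fin K → EuclideanSpace ℝ (Fin Q)) (G : ℝ) (hG : 0 ≤ G)
    (hg : ∀ k, ‖g k‖ ^ 2 ≤ G ^ 2)
    (Nf : Fin K → ℝ) (hNf : ∀ k, 0 < Nf k)
    (NF : ℝ) (hNF : NF = ∑ k, Nf k)
    (gbar : ℝ) (hgbar : gbar = (1 / ((K : ℝ) * Q)) * ∑ k, ∑ q, g k q)
    (c : Fin K → ℂ) (ghat : Fin Q → ℂ)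
    (hghat : ∀ q, ghat q =
      ∑ k, ((Nf k / NF : ℝ) : ℂ) * c k * ((g k q : ℝ) : ℂ)
        + ∑ k, ((Nf k / NF : ℝ) : ℂ) * (1 - c k) * ((gbar : ℝ) : ℂ)) :
    ∑ q, ‖∑ k, ((Nf k / NF : ℝ) : ℂ) * ((g k q : ℝ) : ℂ) - ghat q‖ ^ 2 ≤
      4 * K * G ^ 2 / NF ^ 2 * ∑ k, Nf k ^ 2 * ‖1 - c k‖ ^ 2 :=
  semifl_aggregation_error_bound_general K Q g G hg Nf NF gbar hgbar c ghat hghat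
end

section
/- Let E be a real inner product space, D a finite set with |D| = N, and f_n : E → ℝ differentiable for n ∈ D with global loss F(w) = (1/N)·∑_{n∈D} f_n(w). Assume F is μ-strongly convex and L-smooth with 0 < μ ≤ L, the sample-gradient bound ‖∇f_n(w)‖² ≤ ξ1 + ξ2·‖∇F(w)‖² holds for all n ∈ D and w ∈ E (ξ1 ≥ 0, ξ2 > 0), and w* is a global minimizer of F. Let N_f, N_c be positive integers with N_f ≤ N, N_c ≤ N, set A = N_f·(N−N_f) + N_c·(N−N_c) > 0, and assume ξ2 ≤ (N_f+N_c)²/(4A). Let S_f, S_c ⊆ D with |S_f| = N_f and |S_c| = N_c, and set a1 = N_f/(N_f+N_c), a2 = N_c/(N_f+N_c), g^f = (1/N_f)·∑_{n∈S_f} ∇f_n(w), g^c = (1/N_c)·∑_{n∈S_c} ∇f_n(w). Let ĝ^f ∈ E satisfy ‖g^f − ĝ^f‖² ≤ ε with ε ≥ 0, and let w⁺ = w − (1/L)·(a1·ĝ^f + a2·g^c). Then F(w⁺) − F(w*) ≤ ρ1·(F(w) − F(w*)) + ρ2 + (a1²/L)·ε, where ρ1 = 1 − μ/L + 4μξ2·A/(L·(N_f+N_c)²)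 and ρ2 = 2ξ1·A/(L·(N_f+N_c)²). -/
local notation "⟪" x ", " y "⟫" => @inner ℝ _ _ x y

open Finset

/-! Write `g = ∇F(w)` and `d = a1·ĝ^f + a2·g^c`. L-smoothness bounds the step by
`F(w⁺) ≤ F(w) − (‖g‖² − ‖d − g‖²)/(2L)`, and strong convexity gives the Polyak–Łojasiewicz bound
`‖g‖² ≥ 2μ(F(w) − F(w*))`; so it suffices to show `‖d − g‖² ≤ α + β‖g‖²` with `β ≤ 1`.
The deviations `∇f_n(w) − g` form a zero-sum family, and the sum of a subfamily of size `s`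
out of `N` has squared norm at most `s(N − s)/N` times their total squared norm (Cauchy–Schwarz
on the subfamily and on its complement, whose sums are opposite); that total is at most
`N(ξ1 + ξ2‖g‖²)`. The aggregation error adds `‖a1·(g^f − ĝ^f)‖² ≤ a1²ε`. -/

section Seminormed

variable {E ι : Type*} [SeminormedAddCommGroup E]

theorem norm_sum_sq_le_card_mul (s : Finset ι) (x : ι → E) :
    ‖∑ i ∈ s, x i‖ ^ 2 ≤ #s * ∑ i ∈ s, ‖x i‖ ^ 2 :=
  (pow_le_pow_left₀ (norm_nonneg _) (norm_sum_le _ _) 2).trans sq_sum_le_card_mul_sum_sq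

theorem norm_add_sq_le_two_mul (a b : E) : ‖a + b‖ ^ 2 ≤ 2 * (‖a‖ ^ 2 + ‖b‖ ^ 2) :=
  (pow_le_pow_left₀ (norm_nonneg _) (norm_add_le a b) 2).trans add_sq_le

theorem norm_sub_sq_le_two_mul (a b : E) : ‖a - b‖ ^ 2 ≤ 2 * (‖a‖ ^ 2 + ‖b‖ ^ 2) := by
  simpa [sub_eq_add_neg] using norm_add_sq_le_two_mul a (-b)

theorem card_mul_norm_sum_sq_le_of_sum_eq_zero {D S : Finset ι} (hS : S ⊆ D) {x : ι → E}
    (hx : ∑ i ∈ D, x i = 0) :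
    #D * ‖∑ i ∈ S, x i‖ ^ 2 ≤ #S * (#D - #S) * ∑ i ∈ D, ‖x i‖ ^ 2 := by
  classical
  have hcompl : ∑ i ∈ D \ S, x i = -∑ i ∈ S, x i := by
    rw [eq_neg_iff_add_eq_zero, sum_sdiff hS, hx]
  have hcard : (#(D \ S) : ℝ) = #D - #S := by
    rw [card_sdiff_of_subset hS, Nat.cast_sub (card_le_card hS)]
  have hin := norm_sum_sq_le_card_mul S x
  have hout := norm_sum_sq_le_card_mul (D \ S) x
  rw [hcompl, norm_neg, hcard] at hout
  have hDs : (0 : ℝ) ≤ #D - #S := by rw [← hcard]; exact Nat.cast_nonneg _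
  calc (#D : ℝ) * ‖∑ i ∈ S, x i‖ ^ 2
      = (#D - #S) * ‖∑ i ∈ S, x i‖ ^ 2 + #S * ‖∑ i ∈ S, x i‖ ^ 2 := by ring
    _ ≤ (#D - #S) * (#S * ∑ i ∈ S, ‖x i‖ ^ 2)
        + #S * ((#D - #S) * ∑ i ∈ D \ S, ‖x i‖ ^ 2) := by gcongr
    _ = #S * (#D - #S) * ∑ i ∈ D, ‖x i‖ ^ 2 := by rw [← sum_sdiff hS]; ring

theorem norm_weighted_mean_sub_sq_le [NormedSpace ℝ E] {p q : ℝ} (hp : 0 < p) (hq : 0 < q)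
    (u v g : E) :
    ‖(p / (p + q)) • ((1 / p) • u) + (q / (p + q)) • ((1 / q) • v) - g‖ ^ 2 ≤
      2 * (‖u - p • g‖ ^ 2 + ‖v - q • g‖ ^ 2) / (p + q) ^ 2 := by
  have hvec : (p / (p + q)) • ((1 / p) • u) + (q / (p + q)) • ((1 / q) • v) - g =
      (p + q)⁻¹ • ((u - p • g) + (v - q • g)) := by
    match_scalars <;> field_simp
    ring
  rw [hvec, norm_smul, mul_pow, Real.norm_eq_abs, sq_abs, inv_pow, ← div_eq_inv_mul]
  gcongr
  exact norm_add_sq_le_two_mul _ _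

theorem norm_smul_add_sub_sq_le [NormedSpace ℝ E] (a : ℝ) (x x' y g : E) :
    ‖a • x' + y - g‖ ^ 2 ≤ 2 * (‖a • x + y - g‖ ^ 2 + a ^ 2 * ‖x - x'‖ ^ 2) := by
  have hsplit : a • x' + y - g = (a • x + y - g) - a • (x - x') := by module
  rw [hsplit, ← sq_abs a, ← Real.norm_eq_abs, ← mul_pow, ← norm_smul]
  exact norm_sub_sq_le_two_mul _ _

end Seminormed

section InnerProduct

variable {E ι : Type*} [NormedAddCommGroup E] [InnerProductSpace ℝ E]

theorem sum_norm_sub_sq_of_sum_eq_card_smul {D : Finset ι} {y : ι → E} {m : E}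
    (hm : ∑ i ∈ D, y i = (#D : ℝ) • m) :
    ∑ i ∈ D, ‖y i - m‖ ^ 2 = ∑ i ∈ D, ‖y i‖ ^ 2 - #D * ‖m‖ ^ 2 := by
  simp only [norm_sub_sq_real, sum_add_distrib, sum_sub_distrib, ← mul_sum, ← sum_inner, hm,
    real_inner_smul_left, real_inner_self_eq_norm_sq, sum_const, nsmul_eq_mul]
  ring

theorem norm_sum_sub_card_smul_sq_le {D S : Finset ι} (hS : S ⊆ D) {y : ι → E} {m : E}
    (hm : ∑ i ∈ D, y i = (#D : ℝ) • m) {G : ℝ} (hG : ∀ i ∈ D, ‖y i‖ ^ 2 ≤ G) :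
    ‖∑ i ∈ S, y i - (#S : ℝ) • m‖ ^ 2 ≤ #S * (#D - #S) * G := by
  rcases (#D).eq_zero_or_pos with hD | hD
  · obtain rfl : S = ∅ := subset_empty.mp (card_eq_zero.mp hD ▸ hS)
    simp
  have hx : ∑ i ∈ D, (y i - m) = 0 := by
    rw [sum_sub_distrib, hm, sum_const, ← Nat.cast_smul_eq_nsmul ℝ, sub_self]
  have hxS : ∑ i ∈ S, (y i - m) = ∑ i ∈ S, y i - (#S : ℝ) • m := by
    rw [sum_sub_distrib, sum_const, ← Nat.cast_smul_eq_nsmul ℝ]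
  have hvar : ∑ i ∈ D, ‖y i - m‖ ^ 2 ≤ #D * G := by
    calc ∑ i ∈ D, ‖y i - m‖ ^ 2 ≤ ∑ i ∈ D, ‖y i‖ ^ 2 := by
          rw [sum_norm_sub_sq_of_sum_eq_card_smul hm]
          exact sub_le_self _ (by positivity)
      _ ≤ #D * G := by simpa using sum_le_card_nsmul D _ G hG
  have hDs : (0 : ℝ) ≤ #S * (#D - #S) :=
    mul_nonneg (Nat.cast_nonneg _) (sub_nonneg.mpr (Nat.cast_le.mpr (card_le_card hS)))
  have key := card_mul_norm_sum_sq_le_of_sum_eq_zero hS hx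
  rw [hxS] at key
  refine le_of_mul_le_mul_left ?_ (Nat.cast_pos.mpr hD : (0 : ℝ) < #D)
  calc (#D : ℝ) * ‖∑ i ∈ S, y i - (#S : ℝ) • m‖ ^ 2
      ≤ #S * (#D - #S) * ∑ i ∈ D, ‖y i - m‖ ^ 2 := key
    _ ≤ #S * (#D - #S) * (#D * G) := by gcongr
    _ = #D * (#S * (#D - #S) * G) := by ring

theorem norm_pooled_sample_mean_sub_sq_le {D Sf Sc : Finset ι} (hSfD : Sf ⊆ D) (hScD : Sc ⊆ D)
    (hSf : 0 < #Sf) (hSc : 0 < #Sc) {y : ι → E} {m : E} (hm : ∑ i ∈ D, y i = (#D : ℝ) • m)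
    {G : ℝ} (hG : ∀ i ∈ D, ‖y i‖ ^ 2 ≤ G) :
    ‖((#Sf : ℝ) / (#Sf + #Sc)) • ((1 / (#Sf : ℝ)) • ∑ i ∈ Sf, y i)
        + ((#Sc : ℝ) / (#Sf + #Sc)) • ((1 / (#Sc : ℝ)) • ∑ i ∈ Sc, y i) - m‖ ^ 2 ≤
      2 * (#Sf * (#D - #Sf) + #Sc * (#D - #Sc)) / ((#Sf : ℝ) + #Sc) ^ 2 * G := by
  calc _ ≤ _ := norm_weighted_mean_sub_sq_le (Nat.cast_pos.mpr hSf) (Nat.cast_pos.mpr hSc) _ _ _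
    _ ≤ 2 * (#Sf * (#D - #Sf) * G + #Sc * (#D - #Sc) * G) / ((#Sf : ℝ) + #Sc) ^ 2 := by
        gcongr
        exacts [norm_sum_sub_card_smul_sq_le hSfD hm hG, norm_sum_sub_card_smul_sq_le hScD hm hG]
    _ = _ := by ring

theorem gradient_const_mul_sum [CompleteSpace E] {f : ι → E → ℝ} {D : Finset ι} {w : E}
    (hf : ∀ n ∈ D, DifferentiableAt ℝ (f n) w) (c : ℝ) :
    gradient (fun v => c * ∑ n ∈ D, f n v) w = c • ∑ n ∈ D, gradient (f n) w := by
  have hsum : HasFDerivAt (fun v => ∑ n ∈ D, f n v) (∑ n ∈ D, fderiv ℝ (f n) w) w :=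
    HasFDerivAt.fun_sum fun n hn => (hf n hn).hasFDerivAt
  rw [(hsum.const_mul c).hasGradientAt.gradient, map_smul, map_sum]
  rfl

theorem smooth_step_le {F : E → ℝ} {L : ℝ} (hL : L ≠ 0) {w g d : E}
    (hsm : F (w - (1 / L) • d) ≤
      F w + ⟪w - (1 / L) • d - w, g⟫ + L / 2 * ‖w - (1 / L) • d - w‖ ^ 2) :
    F (w - (1 / L) • d) ≤ F w + (‖d - g‖ ^ 2 - ‖g‖ ^ 2) / (2 * L) := by
  have hquad : ⟪w - (1 / L) • d - w, g⟫ + L / 2 * ‖w - (1 / L) • d - w‖ ^ 2 =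
      (‖d - g‖ ^ 2 - ‖g‖ ^ 2) / (2 * L) := by
    rw [sub_sub_cancel_left, inner_neg_left, real_inner_smul_left, norm_neg, norm_smul,
      mul_pow, Real.norm_eq_abs, sq_abs, norm_sub_sq_real]
    field_simp
    ring
  linarith

theorem polyak_lojasiewicz {F : E → ℝ} {μ : ℝ} (hμ : 0 ≤ μ) {w v g : E}
    (hsc : F v ≥ F w + ⟪v - w, g⟫ + μ / 2 * ‖v - w‖ ^ 2) :
    2 * μ * (F w - F v) ≤ ‖g‖ ^ 2 := by
  have hsq : ‖μ • (v - w) + g‖ ^ 2 = μ ^ 2 * ‖v - w‖ ^ 2 + 2 * μ * ⟪v - w, g⟫ + ‖g‖ ^ 2 := by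
    rw [norm_add_sq_real, norm_smul, mul_pow, Real.norm_eq_abs, sq_abs, real_inner_smul_left]
    ring
  nlinarith [sq_nonneg ‖μ • (v - w) + g‖,
    mul_le_mul_of_nonneg_left hsc (by positivity : 0 ≤ 2 * μ)]

theorem inexact_gradient_step_sub_le {F : E → ℝ} {μ L α β : ℝ} (hμ : 0 ≤ μ) (hL : 0 < L)
    (hβ : β ≤ 1) {w v g d : E}
    (hsc : F v ≥ F w + ⟪v - w, g⟫ + μ / 2 * ‖v - w‖ ^ 2)
    (hsm : F (w - (1 / L) • d) ≤
      F w + ⟪w - (1 / L) • d - w, g⟫ + L / 2 * ‖w - (1 / L) • d - w‖ ^ 2)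
    (hd : ‖d - g‖ ^ 2 ≤ α + β * ‖g‖ ^ 2) :
    F (w - (1 / L) • d) - F v ≤ (1 - μ / L + μ * β / L) * (F w - F v) + α / (2 * L) := by
  have hdesc := smooth_step_le hL.ne' hsm
  have hpl := mul_le_mul_of_nonneg_left (polyak_lojasiewicz hμ hsc)
    (by linarith : 0 ≤ 1 - β)
  have hgap : (1 - μ / L + μ * β / L) * (F w - F v) + α / (2 * L) =
      (F w - F v) + (α - (1 - β) * (2 * μ * (F w - F v))) / (2 * L) := by
    field_simp
    ring
  rw [hgap]
  calc F (w - (1 / L) • d) - F v ≤ (F w - F v) + (‖d - g‖ ^ 2 - ‖g‖ ^ 2) / (2 * L) := by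
        linarith
    _ ≤ (F w - F v) + (α - (1 - β) * (2 * μ * (F w - F v))) / (2 * L) := by
        gcongr (F w - F v) + ?_ / _
        linarith

end InnerProduct

theorem semifl_one_round_contraction_general
    {E : Type*} [NormedAddCommGroup E] [InnerProductSpace ℝ E] [CompleteSpace E]
    {ι : Type*} (D : Finset ι) (N : ℕ) (hN : D.card = N)
    (f : ι → E → ℝ) (hf : ∀ n ∈ D, Differentiable ℝ (f n))
    (F : E → ℝ) (hF : ∀ w : E, F w = (1 / (N : ℝ)) * ∑ n ∈ D, f n w)
    (μ L : ℝ) (hμ : 0 < μ) (hμL : μ ≤ L)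
    (hsc : ∀ w w' : E,
      F w ≥ F w' + ⟪w - w', gradient F w'⟫ + μ / 2 * ‖w - w'‖ ^ 2)
    (hsm : ∀ w w' : E,
      F w ≤ F w' + ⟪w - w', gradient F w'⟫ + L / 2 * ‖w - w'‖ ^ 2)
    (ξ1 ξ2 : ℝ)
    (hgradbound : ∀ n ∈ D, ∀ w : E,
      ‖gradient (f n) w‖ ^ 2 ≤ ξ1 + ξ2 * ‖gradient F w‖ ^ 2)
    (wstar : E)
    (Nf Nc : ℕ) (hNf : 0 < Nf) (hNc : 0 < Nc)
    (A : ℝ) (hA : A = (Nf : ℝ) * ((N : ℝ) - Nf) + (Nc : ℝ) * ((N : ℝ) - Nc))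
    (hApos : 0 < A)
    (hξ2A : ξ2 ≤ ((Nf : ℝ) + Nc) ^ 2 / (4 * A))
    (Sf Sc : Finset ι) (hSfD : Sf ⊆ D) (hScD : Sc ⊆ D)
    (hSf : Sf.card = Nf) (hSc : Sc.card = Nc)
    (w : E)
    (a1 a2 : ℝ) (ha1 : a1 = (Nf : ℝ) / ((Nf : ℝ) + Nc))
    (ha2 : a2 = (Nc : ℝ) / ((Nf : ℝ) + Nc))
    (gf gc : E)
    (hgf : gf = (1 / (Nf : ℝ)) • ∑ n ∈ Sf, gradient (f n) w)
    (hgc : gc = (1 / (Nc : ℝ)) • ∑ n ∈ Sc, gradient (f n) w)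
    (gfhat : E) (ε : ℝ) (hagg : ‖gf - gfhat‖ ^ 2 ≤ ε)
    (ρ1 ρ2 : ℝ)
    (hρ1 : ρ1 = 1 - μ / L + 4 * μ * ξ2 * A / (L * ((Nf : ℝ) + Nc) ^ 2))
    (hρ2 : ρ2 = 2 * ξ1 * A / (L * ((Nf : ℝ) + Nc) ^ 2)) :
    F (w - (1 / L) • (a1 • gfhat + a2 • gc)) - F wstar ≤
      ρ1 * (F w - F wstar) + ρ2 + a1 ^ 2 / L * ε := by
  have hL : 0 < L := hμ.trans_le hμL
  subst hN hSf hSc ha1 ha2 hgf hgc hA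
  have hD : (#D : ℝ) ≠ 0 := (Nat.cast_pos.mpr (hNf.trans_le (card_le_card hSfD))).ne'
  have hmean : ∑ n ∈ D, gradient (f n) w = (#D : ℝ) • gradient F w := by
    rw [show F = _ from funext hF,
      gradient_const_mul_sum (fun n hn => (hf n hn).differentiableAt), smul_smul,
      mul_one_div_cancel hD, one_smul]
  set K : ℝ := (#Sf : ℝ) + #Sc
  set A : ℝ := #Sf * (#D - #Sf) + #Sc * (#D - #Sc)
  set a1 : ℝ := #Sf / K
  set gf := (1 / (#Sf : ℝ)) • ∑ n ∈ Sf, gradient (f n) w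
  set gc := (1 / (#Sc : ℝ)) • ∑ n ∈ Sc, gradient (f n) w
  have hpooled := norm_pooled_sample_mean_sub_sq_le hSfD hScD hNf hNc hmean
    fun n hn => hgradbound n hn w
  have hdir : ‖(a1 • gfhat + (#Sc / K) • gc) - gradient F w‖ ^ 2 ≤
      (4 * A * ξ1 / K ^ 2 + 2 * a1 ^ 2 * ε) + 4 * A * ξ2 / K ^ 2 * ‖gradient F w‖ ^ 2 := by
    calc _ ≤ 2 * (‖a1 • gf + (#Sc / K) • gc - gradient F w‖ ^ 2 + a1 ^ 2 * ‖gf - gfhat‖ ^ 2) :=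
          norm_smul_add_sub_sq_le _ _ _ _ _
      _ ≤ 2 * (2 * A / K ^ 2 * (ξ1 + ξ2 * ‖gradient F w‖ ^ 2) + a1 ^ 2 * ε) := by
          gcongr
      _ = _ := by ring
  have hβ : 4 * A * ξ2 / K ^ 2 ≤ 1 := by
    rw [le_div_iff₀ (by positivity)] at hξ2A
    rw [div_le_one (by positivity)]
    linarith
  calc _ ≤ (1 - μ / L + μ * (4 * A * ξ2 / K ^ 2) / L) * (F w - F wstar)
        + (4 * A * ξ1 / K ^ 2 + 2 * a1 ^ 2 * ε) / (2 * L) :=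
      inexact_gradient_step_sub_le hμ.le hL hβ (hsc wstar w) (hsm _ w) hdir
    _ = _ := by
      rw [hρ1, hρ2]
      field_simp
      ring

/-- One-round contraction underlying Theorem 1 (SemiFL): with the hybrid update
`w⁺ = w − (1/L)·(a1·ĝ^f + a2·g^c)`, where the aggregated federated gradient `ĝ^f`
has distortion `‖g^f − ĝ^f‖² ≤ ε`, the optimality gap contracts as
`F(w⁺) − F(w*) ≤ ρ1·(F(w) − F(w*)) + ρ2 + (a1²/L)·ε`. -/
theorem semifl_one_round_contraction
    {E : Type*} [NormedAddCommGroup E] [InnerProductSpace ℝ E] [CompleteSpace E]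
    {ι : Type*} (D : Finset ι) (N : ℕ) (hN : D.card = N)
    (f : ι → E → ℝ) (hf : ∀ n ∈ D, Differentiable ℝ (f n))
    (F : E → ℝ) (hF : ∀ w : E, F w = (1 / (N : ℝ)) * ∑ n ∈ D, f n w)
    (μ L : ℝ) (hμ : 0 < μ) (hμL : μ ≤ L)
    (hsc : ∀ w w' : E,
      F w ≥ F w' + ⟪w - w', gradient F w'⟫ + μ / 2 * ‖w - w'‖ ^ 2)
    (hsm : ∀ w w' : E,
      F w ≤ F w' + ⟪w - w', gradient F w'⟫ + L / 2 * ‖w - w'‖ ^ 2)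
    (ξ1 ξ2 : ℝ) (hξ1 : 0 ≤ ξ1) (hξ2 : 0 < ξ2)
    (hgradbound : ∀ n ∈ D, ∀ w : E,
      ‖gradient (f n) w‖ ^ 2 ≤ ξ1 + ξ2 * ‖gradient F w‖ ^ 2)
    (wstar : E) (hmin : ∀ w : E, F wstar ≤ F w)
    (Nf Nc : ℕ) (hNf : 0 < Nf) (hNc : 0 < Nc) (hNfN : Nf ≤ N) (hNcN : Nc ≤ N)
    (A : ℝ) (hA : A = (Nf : ℝ) * ((N : ℝ) - Nf) + (Nc : ℝ) * ((N : ℝ) - Nc))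
    (hApos : 0 < A)
    (hξ2A : ξ2 ≤ ((Nf : ℝ) + Nc) ^ 2 / (4 * A))
    (Sf Sc : Finset ι) (hSfD : Sf ⊆ D) (hScD : Sc ⊆ D)
    (hSf : Sf.card = Nf) (hSc : Sc.card = Nc)
    (w : E)
    (a1 a2 : ℝ) (ha1 : a1 = (Nf : ℝ) / ((Nf : ℝ) + Nc))
    (ha2 : a2 = (Nc : ℝ) / ((Nf : ℝ) + Nc))
    (gf gc : E)
    (hgf : gf = (1 / (Nf : ℝ)) • ∑ n ∈ Sf, gradient (f n) w)
    (hgc : gc = (1 / (Nc : ℝ)) • ∑ n ∈ Sc, gradient (f n) w)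
    (gfhat : E) (ε : ℝ) (hε : 0 ≤ ε) (hagg : ‖gf - gfhat‖ ^ 2 ≤ ε)
    (ρ1 ρ2 : ℝ)
    (hρ1 : ρ1 = 1 - μ / L + 4 * μ * ξ2 * A / (L * ((Nf : ℝ) + Nc) ^ 2))
    (hρ2 : ρ2 = 2 * ξ1 * A / (L * ((Nf : ℝ) + Nc) ^ 2)) :
    F (w - (1 / L) • (a1 • gfhat + a2 • gc)) - F wstar ≤
      ρ1 * (F w - F wstar) + ρ2 + a1 ^ 2 / L * ε :=
  semifl_one_round_contraction_general D N hN f hf F hF μ L hμ hμL hsc hsm ξ1 ξ2 hgradbound wstar Nf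
    Nc hNf hNc A hA hApos hξ2A Sf Sc hSfD hScD hSf hSc w a1 a2 ha1 ha2 gf gc hgf hgc gfhat ε hagg ρ1
    ρ2 hρ1 hρ2
end

section
/- Let E be a real inner product space and F : E → ℝ be differentiable, μ-strongly convex and L-smooth with 0 < μ and 0 < L, minimized at w* ∈ E. Let Λ > 0 and τ > 0 satisfy Λ·μ > 1 and τ ≥ Λ·L, let t ≥ 1 be a natural number, and set η = Λ/(t + τ). For w ∈ E and e ∈ E define w⁺ = w − η·(∇F(w) − e) and θ = max{ Λ·(t+τ)·‖e‖²/(2·(Λμ − 1)), (t+τ)·(F(w) − F(w*)) }. Then F(w⁺) − F(w*) ≤ θ/(t + τ + 1). -/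
/-!
Smoothness with `L η ≤ 1` makes the inexact gradient step decrease `F` by `η/2 ‖∇F w‖²`, up to
the error term `η/2 ‖e‖²`; strong convexity gives the Polyak–Łojasiewicz inequality
`‖∇F w‖² ≥ 2μ (F w - F w*)`, so the gap contracts by the factor `1 - Λμ/(t+τ)`. Both resulting
terms are bounded by multiples of `θ` whose sum is `(t+τ-1) θ/(t+τ)² ≤ θ/(t+τ+1)`.
-/

local notation "⟪" x ", " y "⟫" => @inner ℝ _ _ x y

section GradientStep

variable {E : Type*} [NormedAddCommGroup E] [InnerProductSpace ℝ E] [CompleteSpace E]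
  {F : E → ℝ} {μ L : ℝ}

theorem strongConvexity_const_le_smoothness_const [Nontrivial E]
    (hsc : ∀ w w' : E, F w ≥ F w' + ⟪w - w', gradient F w'⟫ + μ / 2 * ‖w - w'‖ ^ 2)
    (hsm : ∀ w w' : E, F w ≤ F w' + ⟪w - w', gradient F w'⟫ + L / 2 * ‖w - w'‖ ^ 2) :
    μ ≤ L := by
  obtain ⟨v, hv⟩ := exists_ne (0 : E)
  have hlower := hsc v 0
  have hupper := hsm v 0
  rw [sub_zero] at hlower hupper
  have hv2 : 0 < ‖v‖ ^ 2 := pow_pos (norm_pos_iff.2 hv) 2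
  nlinarith

theorem two_mul_mul_sub_le_norm_gradient_sq (hμ : 0 < μ)
    (hsc : ∀ w w' : E, F w ≥ F w' + ⟪w - w', gradient F w'⟫ + μ / 2 * ‖w - w'‖ ^ 2)
    (w x : E) : 2 * μ * (F w - F x) ≤ ‖gradient F w‖ ^ 2 := by
  set g := gradient F w
  have hlower := hsc x w
  have hsquare : ‖μ • (x - w) + g‖ ^ 2 = μ ^ 2 * ‖x - w‖ ^ 2 + 2 * (μ * ⟪x - w, g⟫) + ‖g‖ ^ 2 := by
    rw [norm_add_sq_real, real_inner_smul_left, norm_smul, Real.norm_eq_abs, mul_pow, sq_abs]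
  nlinarith [sq_nonneg ‖μ • (x - w) + g‖]

theorem le_of_inexact_gradient_step {η : ℝ} (hη : 0 ≤ η) (hLη : L * η ≤ 1)
    (hsm : ∀ w w' : E, F w ≤ F w' + ⟪w - w', gradient F w'⟫ + L / 2 * ‖w - w'‖ ^ 2)
    (w e : E) :
    F (w - η • (gradient F w - e)) ≤ F w - η / 2 * ‖gradient F w‖ ^ 2 + η / 2 * ‖e‖ ^ 2 := by
  have hupper := hsm (w - η • (gradient F w - e)) w
  set g := gradient F w
  rw [sub_sub_cancel_left, inner_neg_left, real_inner_smul_left, norm_neg, norm_smul,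
    Real.norm_eq_abs, mul_pow, sq_abs] at hupper
  have hquad : L / 2 * (η ^ 2 * ‖g - e‖ ^ 2) ≤ η / 2 * ‖g - e‖ ^ 2 := by
    have := mul_le_mul_of_nonneg_right hLη (mul_nonneg hη (sq_nonneg ‖g - e‖))
    linarith
  have hpolar : η / 2 * ‖g - e‖ ^ 2 = η * ⟪g - e, g⟫ - η / 2 * ‖g‖ ^ 2 + η / 2 * ‖e‖ ^ 2 := by
    rw [norm_sub_sq_real, inner_sub_left, real_inner_self_eq_norm_sq, real_inner_comm]
    ring
  linarith

theorem sub_le_of_inexact_gradient_step {η : ℝ} (hμ : 0 < μ) (hη : 0 ≤ η) (hLη : L * η ≤ 1)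
    (hsc : ∀ w w' : E, F w ≥ F w' + ⟪w - w', gradient F w'⟫ + μ / 2 * ‖w - w'‖ ^ 2)
    (hsm : ∀ w w' : E, F w ≤ F w' + ⟪w - w', gradient F w'⟫ + L / 2 * ‖w - w'‖ ^ 2)
    (w e x : E) :
    F (w - η • (gradient F w - e)) - F x ≤ (1 - η * μ) * (F w - F x) + η / 2 * ‖e‖ ^ 2 := by
  have hdescent := le_of_inexact_gradient_step hη hLη hsm w e
  have hpl := mul_le_mul_of_nonneg_left (two_mul_mul_sub_le_norm_gradient_sq hμ hsc w x) hη
  linarith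

end GradientStep

theorem contraction_add_le_div_add_one {T a A B θ : ℝ} (ha : 1 < a) (haT : a ≤ T) (hB : 0 ≤ B)
    (hA : T * A ≤ θ) (hBθ : T * B ≤ (a - 1) * θ) :
    (1 - a / T) * A + B / T ≤ θ / (T + 1) := by
  have hT : 0 < T := by linarith
  have hθ : 0 ≤ θ := by nlinarith
  have hsum : T * ((1 - a / T) * A + B / T) ≤ (T - 1) / T * θ := by
    have hdiv : (1 - a / T) * (T * A) ≤ (1 - a / T) * θ :=
      mul_le_mul_of_nonneg_left hA (by rw [sub_nonneg, div_le_one hT]; exact haT)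
    have hB' : B ≤ (a - 1) / T * θ := by
      rw [div_mul_eq_mul_div, le_div_iff₀ hT]; linarith
    calc T * ((1 - a / T) * A + B / T) = (1 - a / T) * (T * A) + B := by field_simp
      _ ≤ (1 - a / T) * θ + (a - 1) / T * θ := add_le_add hdiv hB'
      _ = (T - 1) / T * θ := by field_simp; ring
  -- `(T - 1)(T + 1) ≤ T²`
  rw [le_div_iff₀ (by linarith)]
  have hsq : (T - 1) / T * θ * (T + 1) ≤ T * θ := by
    rw [div_mul_eq_mul_div, div_mul_eq_mul_div, div_le_iff₀ hT]; nlinarith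
  nlinarith

theorem semifl_decreasing_lr_step_general
    {E : Type*} [NormedAddCommGroup E] [InnerProductSpace ℝ E] [CompleteSpace E]
    (F : E → ℝ) (μ L : ℝ) (hμ : 0 < μ)
    (hsc : ∀ w w' : E,
      F w ≥ F w' + ⟪w - w', gradient F w'⟫ + μ / 2 * ‖w - w'‖ ^ 2)
    (hsm : ∀ w w' : E,
      F w ≤ F w' + ⟪w - w', gradient F w'⟫ + L / 2 * ‖w - w'‖ ^ 2)
    (wstar : E)
    (Λ τ : ℝ) (hΛ : 0 < Λ) (hτ : 0 < τ) (hΛμ : 1 < Λ * μ) (hτΛL : Λ * L ≤ τ)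
    (t : ℕ)
    (η : ℝ) (hη : η = Λ / ((t : ℝ) + τ))
    (w e : E) (θ : ℝ)
    (hθ : θ = max (Λ * ((t : ℝ) + τ) * ‖e‖ ^ 2 / (2 * (Λ * μ - 1)))
                  (((t : ℝ) + τ) * (F w - F wstar))) :
    F (w - η • (gradient F w - e)) - F wstar ≤ θ / ((t : ℝ) + τ + 1) := by
  set T : ℝ := (t : ℝ) + τ
  have hτT : τ ≤ T := le_add_of_nonneg_left t.cast_nonneg
  have hT : 0 < T := hτ.trans_le hτT
  rcases subsingleton_or_nontrivial E with hE | hE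
  · have hθ0 : 0 ≤ θ := hθ ▸ le_max_of_le_right (by rw [Subsingleton.elim w wstar]; simp)
    rw [Subsingleton.elim (w - η • _) wstar, sub_self]
    exact div_nonneg hθ0 (by linarith)
  have hΛμT : Λ * μ ≤ T := by
    nlinarith [strongConvexity_const_le_smoothness_const hsc hsm]
  have hLη : L * η ≤ 1 := by
    rw [hη, mul_div_assoc', div_le_one hT]; linarith
  have hstep := sub_le_of_inexact_gradient_step hμ (hη ▸ by positivity) hLη hsc hsm w e wstar
  have hθA : T * (F w - F wstar) ≤ θ := hθ ▸ le_max_right _ _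
  have hθB : T * (Λ / 2 * ‖e‖ ^ 2) ≤ (Λ * μ - 1) * θ := by
    have := hθ ▸ le_max_left (Λ * T * ‖e‖ ^ 2 / (2 * (Λ * μ - 1))) (T * (F w - F wstar))
    rw [div_le_iff₀ (by linarith)] at this
    linarith
  calc F (w - η • (gradient F w - e)) - F wstar
      ≤ (1 - Λ * μ / T) * (F w - F wstar) + Λ / 2 * ‖e‖ ^ 2 / T := by
        convert hstep using 3 <;> rw [hη] <;> ring
    _ ≤ θ / (T + 1) := contraction_add_le_div_add_one hΛμ hΛμT (by positivity) hθA hθB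

/-- One-round step of Corollary 2 (decreasing learning rate `η = Λ/(t+τ)`): the
update `w⁺ = w − η·(∇F(w) − e)` satisfies `F(w⁺) − F(w*) ≤ θ/(t+τ+1)` with
`θ = max{Λ(t+τ)‖e‖²/(2(Λμ−1)), (t+τ)(F(w) − F(w*))}`. -/
theorem semifl_decreasing_lr_step
    {E : Type*} [NormedAddCommGroup E] [InnerProductSpace ℝ E] [CompleteSpace E]
    (F : E → ℝ) (μ L : ℝ) (hμ : 0 < μ) (hL : 0 < L) (hdiff : Differentiable ℝ F)
    (hsc : ∀ w w' : E,
      F w ≥ F w' + ⟪w - w', gradient F w'⟫ + μ / 2 * ‖w - w'‖ ^ 2)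
    (hsm : ∀ w w' : E,
      F w ≤ F w' + ⟪w - w', gradient F w'⟫ + L / 2 * ‖w - w'‖ ^ 2)
    (wstar : E) (hmin : ∀ w : E, F wstar ≤ F w)
    (Λ τ : ℝ) (hΛ : 0 < Λ) (hτ : 0 < τ) (hΛμ : 1 < Λ * μ) (hτΛL : Λ * L ≤ τ)
    (t : ℕ) (ht : 1 ≤ t)
    (η : ℝ) (hη : η = Λ / ((t : ℝ) + τ))
    (w e : E) (θ : ℝ)
    (hθ : θ = max (Λ * ((t : ℝ) + τ) * ‖e‖ ^ 2 / (2 * (Λ * μ - 1)))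
                  (((t : ℝ) + τ) * (F w - F wstar))) :
    F (w - η • (gradient F w - e)) - F wstar ≤ θ / ((t : ℝ) + τ + 1) :=
  semifl_decreasing_lr_step_general F μ L hμ hsc hsm wstar Λ τ hΛ hτ hΛμ hτΛL t η hη w e θ hθ
end

section
/- Let μ, L, ξ1, ξ2 be positive reals and let N, N_f, N_c be positive reals with S := N_f + N_c and N ≥ 2·S. Define A = N_f·(N−N_f) + N_c·(N−N_c) and the constants ρ1 = 1 − μ/L + 4μξ2·A/(L·S²), ρ2 = 2ξ1·A/(L·S²) (SemiFL), ρ̃1 = 1 − μ/L + 8μξ2·(N−S)/(L·S), ρ̃2 = 4ξ1·(N−S)/(L·S) (FL), and ρ̂1 = 1 − μ/L + μξ2·(N−S)/(L·S), ρ̂2 = ξ1·(N−S)/(2·L·S) (CL). Then ρ̂1 ≤ ρ1 ≤ ρ̃1 and ρ̂2 ≤ ρ2 ≤ ρ̃2. -/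
/-- Algebraic core of Theorem 2's ordering `ψ_T^{CL} ≤ ψ_T^{SemiFL} ≤ ψ_T^{FL}`:
the contraction factors and offset constants of CL, SemiFL, and FL satisfy
`ρ̂1 ≤ ρ1 ≤ ρ̃1` and `ρ̂2 ≤ ρ2 ≤ ρ̃2` when `N ≥ 2(N_f+N_c)`. -/
theorem semifl_constants_ordering
    (μ L ξ1 ξ2 N Nf Nc : ℝ)
    (hμ : 0 < μ) (hL : 0 < L) (hξ1 : 0 < ξ1) (hξ2 : 0 < ξ2)
    (hNf : 0 < Nf) (hNc : 0 < Nc) (hN : 0 < N)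
    (S : ℝ) (hS : S = Nf + Nc) (hNS : 2 * S ≤ N)
    (A : ℝ) (hA : A = Nf * (N - Nf) + Nc * (N - Nc))
    (ρ1 ρ2 ρt1 ρt2 ρh1 ρh2 : ℝ)
    (hρ1 : ρ1 = 1 - μ / L + 4 * μ * ξ2 * A / (L * S ^ 2))
    (hρ2 : ρ2 = 2 * ξ1 * A / (L * S ^ 2))
    (hρt1 : ρt1 = 1 - μ / L + 8 * μ * ξ2 * (N - S) / (L * S))
    (hρt2 : ρt2 = 4 * ξ1 * (N - S) / (L * S))
    (hρh1 : ρh1 = 1 - μ / L + μ * ξ2 * (N - S) / (L * S))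
    (hρh2 : ρh2 = ξ1 * (N - S) / (2 * L * S)) :
    (ρh1 ≤ ρ1 ∧ ρ1 ≤ ρt1) ∧ (ρh2 ≤ ρ2 ∧ ρ2 ≤ ρt2) := by
  have hSpos : 0 < S := by rw [hS]; linarith
  have hNSp : 0 < N - S := by linarith
  have key2 : S * (N - S) ≤ A := by rw [hS, hA]; nlinarith [mul_pos hNf hNc]
  have key1 : A ≤ 2 * S * (N - S) := by
    rw [hS, hA]; nlinarith [sq_nonneg (Nf - Nc)]
  subst hρ1 hρ2 hρt1 hρt2 hρh1 hρh2
  refine ⟨⟨?_, ?_⟩, ?_, ?_⟩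
  · have : μ * ξ2 * (N - S) / (L * S) ≤ 4 * μ * ξ2 * A / (L * S ^ 2) := by
      rw [div_le_div_iff₀ (by positivity) (by positivity)]
      nlinarith [mul_pos hμ hξ2, mul_pos hL hSpos, mul_pos (mul_pos hμ hξ2) (mul_pos hL hSpos)]
    linarith
  · have : 4 * μ * ξ2 * A / (L * S ^ 2) ≤ 8 * μ * ξ2 * (N - S) / (L * S) := by
      rw [div_le_div_iff₀ (by positivity) (by positivity)]
      nlinarith [mul_pos hμ hξ2, mul_pos (mul_pos hμ hξ2) (mul_pos hL hSpos)]
    linarith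
  · rw [div_le_div_iff₀ (by positivity) (by positivity)]
    nlinarith [mul_pos (mul_pos hξ1 hL) hSpos]
  · rw [div_le_div_iff₀ (by positivity) (by positivity)]
    nlinarith [mul_pos (mul_pos hξ1 hL) hSpos]
end

section
/- Let ω0, ω1 be positive reals, ĥ0, ĥ1 ∈ ℂ, and ι, ε reals with |ĥ1|² > ω1·(ι − ε) and ω1·ĥ0 ≠ ω0·ĥ1. Set r = √(|ĥ1|²/ω1² − (ι − ε)/ω1) and λ = −ω0/ω1 + |ω0·ĥ1 − ω1·ĥ0|/(ω1·√(|ĥ1|² − ω1·(ι − ε))), and assume λ ≥ 0. Then b* = ĥ1/ω1 + r·exp(i·arg(ω1·ĥ0 − ω0·ĥ1)) is a global minimizer of the objective b ↦ ω0·|b|² − 2·Re(conj(b)·ĥ0) over the feasible set {b ∈ ℂ : ω1·|b|² − 2·Re(conj(b)·ĥ1) + ι − ε ≤ 0}, and the constraint holds with equality at b*. -/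
/-!
Completing the square turns the constraint into the closed disk of radius `r` about `c = ĥ1/ω1`
and the objective into `ω0 |b - d|²` plus a constant, with `d = ĥ0/ω0`. Since
`d - c = (ω1ĥ0 - ω0ĥ1)/(ω0ω1)`, the condition `λ ≥ 0` says exactly that `d` lies outside the open
disk, and `b*` is the point of the circle on the ray from `c` towards `d`; by the triangle
inequality it is the point of the disk nearest to `d`.
-/

open Complex ComplexConjugate

theorem norm_add_smul_sub_le_of_norm_sub_le {E : Type*} [NormedAddCommGroup E] [NormedSpace ℝ E]
    {b c d u : E} {r : ℝ} (hu : ‖u‖ = 1) (hdc : d - c = ‖d - c‖ • u) (hr : r ≤ ‖d - c‖)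
    (hb : ‖b - c‖ ≤ r) : ‖c + r • u - d‖ ≤ ‖b - d‖ := by
  have hdiff : c + r • u - d = (r - ‖d - c‖) • u := by
    rw [sub_smul, ← hdc]; abel
  calc ‖c + r • u - d‖ = ‖d - c‖ - r := by
        rw [hdiff, norm_smul, hu, mul_one, Real.norm_of_nonpos (sub_nonpos.2 hr), neg_sub]
    _ ≤ ‖d - b‖ + ‖b - c‖ - r := by gcongr; exact norm_sub_le_norm_sub_add_norm_sub d b c
    _ ≤ ‖b - d‖ := by rw [norm_sub_rev d b]; linarith

theorem Real.sqrt_div_sq_sub_div {ω : ℝ} (hω : 0 < ω) (a x : ℝ) :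
    √(a / ω ^ 2 - x / ω) = √(a - ω * x) / ω := by
  rw [show a / ω ^ 2 - x / ω = (a - ω * x) / ω ^ 2 by field_simp, Real.sqrt_div' _ (by positivity),
    Real.sqrt_sq hω.le]

namespace Complex

theorem mul_norm_sq_sub_two_re_conj_mul {w : ℝ} (hw : w ≠ 0) (b h : ℂ) :
    w * ‖b‖ ^ 2 - 2 * (conj b * h).re = w * ‖b - h / w‖ ^ 2 - ‖h‖ ^ 2 / w := by
  simp only [Complex.sq_norm, normSq_apply, mul_re, sub_re, sub_im, div_ofReal_re, div_ofReal_im,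
    conj_re, conj_im]
  field_simp
  ring

theorem mul_norm_sq_sub_two_re_conj_mul_add {w κ : ℝ} (hw : 0 < w) {h : ℂ} (hκ : w * κ ≤ ‖h‖ ^ 2)
    (b : ℂ) :
    w * ‖b‖ ^ 2 - 2 * (conj b * h).re + κ =
      w * (‖b - h / w‖ ^ 2 - √(‖h‖ ^ 2 / w ^ 2 - κ / w) ^ 2) := by
  rw [Real.sqrt_div_sq_sub_div hw, div_pow, Real.sq_sqrt (by linarith),
    mul_norm_sq_sub_two_re_conj_mul hw.ne']
  field_simp
  ring

theorem div_ofReal_sub_div_ofReal {ω0 ω1 : ℝ} (hω0 : ω0 ≠ 0) (hω1 : ω1 ≠ 0) (h0 h1 : ℂ) :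
    h0 / ω0 - h1 / ω1 = ((ω0 * ω1)⁻¹ : ℝ) * (ω1 * h0 - ω0 * h1) := by
  have : (ω0 : ℂ) ≠ 0 := ofReal_ne_zero.2 hω0
  have : (ω1 : ℂ) ≠ 0 := ofReal_ne_zero.2 hω1
  push_cast
  field_simp

theorem div_ofReal_sub_div_ofReal_eq_norm_smul {ω0 ω1 : ℝ} (hω0 : 0 < ω0) (hω1 : 0 < ω1)
    (h0 h1 : ℂ) :
    h0 / ω0 - h1 / ω1 = ‖h0 / ω0 - h1 / ω1‖ • exp (I * (arg (ω1 * h0 - ω0 * h1) : ℂ)) := by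
  rw [← arg_real_mul _ (inv_pos.2 (mul_pos hω0 hω1)),
    ← div_ofReal_sub_div_ofReal hω0.ne' hω1.ne', mul_comm I, real_smul]
  exact (norm_mul_exp_arg_mul_I _).symm

theorem sqrt_div_sq_sub_div_le_norm_div_sub_div {ω0 ω1 κ : ℝ} (hω0 : 0 < ω0) (hω1 : 0 < ω1)
    {h0 h1 : ℂ} (hκ : ω1 * κ < ‖h1‖ ^ 2)
    (hlam : 0 ≤ -ω0 / ω1 + ‖(ω0 : ℂ) * h1 - ω1 * h0‖ / (ω1 * √(‖h1‖ ^ 2 - ω1 * κ))) :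
    √(‖h1‖ ^ 2 / ω1 ^ 2 - κ / ω1) ≤ ‖h0 / ω0 - h1 / ω1‖ := by
  rw [Real.sqrt_div_sq_sub_div hω1]
  set s := √(‖h1‖ ^ 2 - ω1 * κ)
  have hs : 0 < s := Real.sqrt_pos.2 (by linarith)
  have hs_le : ω0 * s ≤ ‖ω1 * h0 - ω0 * h1‖ := by
    rw [norm_sub_rev, neg_div, neg_add_eq_sub, sub_nonneg, div_le_div_iff₀ hω1 (by positivity)]
      at hlam
    nlinarith
  calc s / ω1 = ω0 * s * (ω0 * ω1)⁻¹ := by field_simp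
    _ ≤ ‖ω1 * h0 - ω0 * h1‖ * (ω0 * ω1)⁻¹ := by gcongr
    _ = ‖h0 / ω0 - h1 / ω1‖ := by
      rw [div_ofReal_sub_div_ofReal hω0.ne' hω1.ne', norm_mul, norm_real,
        Real.norm_of_nonneg (by positivity), mul_comm]

end Complex

theorem semifl_single_antenna_beamformer_general
    (ω0 ω1 : ℝ) (hω0 : 0 < ω0) (hω1 : 0 < ω1)
    (h0 h1 : ℂ) (ι ε : ℝ)
    (hfeas : ω1 * (ι - ε) < ‖h1‖ ^ 2)
    (r : ℝ) (hr : r = Real.sqrt (‖h1‖ ^ 2 / ω1 ^ 2 - (ι - ε) / ω1))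
    (lam : ℝ)
    (hlam : lam = -ω0 / ω1 + ‖(ω0 : ℂ) * h1 - (ω1 : ℂ) * h0‖ /
      (ω1 * Real.sqrt (‖h1‖ ^ 2 - ω1 * (ι - ε))))
    (hlam0 : 0 ≤ lam)
    (bstar : ℂ)
    (hb : bstar = h1 / (ω1 : ℂ) +
      (r : ℂ) * Complex.exp (Complex.I * ((((ω1 : ℂ) * h0 - (ω0 : ℂ) * h1).arg : ℝ) : ℂ))) :
    (ω1 * ‖bstar‖ ^ 2 - 2 * ((starRingEnd ℂ bstar) * h1).re + ι - ε = 0) ∧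
    ∀ b : ℂ, ω1 * ‖b‖ ^ 2 - 2 * ((starRingEnd ℂ b) * h1).re + ι - ε ≤ 0 →
      ω0 * ‖bstar‖ ^ 2 - 2 * ((starRingEnd ℂ bstar) * h0).re ≤
        ω0 * ‖b‖ ^ 2 - 2 * ((starRingEnd ℂ b) * h0).re := by
  subst hlam hb
  have hcon (b : ℂ) : ω1 * ‖b‖ ^ 2 - 2 * (conj b * h1).re + ι - ε =
      ω1 * (‖b - h1 / ω1‖ ^ 2 - r ^ 2) := by
    rw [add_sub_assoc, hr, mul_norm_sq_sub_two_re_conj_mul_add hω1 hfeas.le]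
  have hr0 : 0 ≤ r := hr ▸ Real.sqrt_nonneg _
  rw [← real_smul]
  refine ⟨?_, fun b hb => ?_⟩
  · rw [hcon, add_sub_cancel_left, norm_smul, norm_exp_I_mul_ofReal, mul_one,
      Real.norm_of_nonneg hr0, sub_self, mul_zero]
  have hbc : ‖b - h1 / ω1‖ ≤ r := by
    rw [hcon] at hb
    exact (pow_le_pow_iff_left₀ (norm_nonneg _) hr0 two_ne_zero).1 (by nlinarith)
  rw [mul_norm_sq_sub_two_re_conj_mul hω0.ne', mul_norm_sq_sub_two_re_conj_mul hω0.ne']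
  gcongr
  exact norm_add_smul_sub_le_of_norm_sub_le (norm_exp_I_mul_ofReal _)
    (div_ofReal_sub_div_ofReal_eq_norm_smul hω0 hω1 h0 h1)
    (hr ▸ sqrt_div_sq_sub_div_le_norm_div_sub_div hω0 hω1 hfeas hlam0) hbc

/-- Lemma 3 of the paper: closed-form optimal single-antenna aggregation beamformer.
`b* = ĥ1/ω1 + r·exp(i·arg(ω1ĥ0 − ω0ĥ1))` globally minimizes
`b ↦ ω0|b|² − 2Re(conj(b)ĥ0)` over `{b : ω1|b|² − 2Re(conj(b)ĥ1) + ι − ε ≤ 0}`,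
and the constraint is active at `b*`. -/
theorem semifl_single_antenna_beamformer
    (ω0 ω1 : ℝ) (hω0 : 0 < ω0) (hω1 : 0 < ω1)
    (h0 h1 : ℂ) (ι ε : ℝ)
    (hfeas : ω1 * (ι - ε) < ‖h1‖ ^ 2)
    (hne : (ω1 : ℂ) * h0 ≠ (ω0 : ℂ) * h1)
    (r : ℝ) (hr : r = Real.sqrt (‖h1‖ ^ 2 / ω1 ^ 2 - (ι - ε) / ω1))
    (lam : ℝ)
    (hlam : lam = -ω0 / ω1 + ‖(ω0 : ℂ) * h1 - (ω1 : ℂ) * h0‖ /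
      (ω1 * Real.sqrt (‖h1‖ ^ 2 - ω1 * (ι - ε))))
    (hlam0 : 0 ≤ lam)
    (bstar : ℂ)
    (hb : bstar = h1 / (ω1 : ℂ) +
      (r : ℂ) * Complex.exp (Complex.I * ((((ω1 : ℂ) * h0 - (ω0 : ℂ) * h1).arg : ℝ) : ℂ))) :
    (ω1 * ‖bstar‖ ^ 2 - 2 * ((starRingEnd ℂ bstar) * h1).re + ι - ε = 0) ∧
    ∀ b : ℂ, ω1 * ‖b‖ ^ 2 - 2 * ((starRingEnd ℂ b) * h1).re + ι - ε ≤ 0 →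
      ω0 * ‖bstar‖ ^ 2 - 2 * ((starRingEnd ℂ bstar) * h0).re ≤
        ω0 * ‖b‖ ^ 2 - 2 * ((starRingEnd ℂ b) * h0).re :=
  semifl_single_antenna_beamformer_general ω0 ω1 hω0 hω1 h0 h1 ι ε hfeas r hr lam hlam hlam0 bstar
    hb
end
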